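/- Let T and S be bounded linear operators on H admitting reduced A-adjoints T^♯ and S^♯. Then, for both choices of sign, ‖T ± S‖_A ≤ √(‖T^♯T + S^♯S‖_A + ‖T^♯S + S^♯T‖_A) ≤ ‖T‖_A + ‖S‖_A. -/

import Mathlib

/-
Writing `‖x‖_A = ‖A^{1/2} x‖` makes `‖·‖_A` a seminorm satisfying Cauchy–Schwarz. Since `opnA` is an
`sSup`, which is `0` on unbounded sets, the real work is to show that the operators involved are
`A`-bounded: for an `A`-selfadjoint `R`, iterating `‖R x‖_A ^ 2 ≤ ‖x‖_A ‖R² x‖_A` gives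
`‖R x‖_A ≤ ‖R‖ ‖x‖_A`; applied to `R = T♯T` and combined with `‖T x‖_A ^ 2 ≤ ‖T♯T x‖_A ‖x‖_A` this
bounds `T`, and then `‖T♯ x‖_A ≤ ‖T‖_A ‖x‖_A`.
With `P = T♯T + S♯S` and `Q = T♯S + S♯T` we have `(T ± S)♯(T ± S) = P ± Q`, so
`‖(T ± S) x‖_A ^ 2 ≤ ‖(P ± Q) x‖_A ‖x‖_A ≤ ‖P‖_A + ‖Q‖_A` on the unit sphere, while
`‖P‖_A ≤ ‖T‖_A ^ 2 + ‖S‖_A ^ 2` and `‖Q‖_A ≤ 2 ‖T‖_A ‖S‖_A`.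
-/

open ContinuousLinearMap

variable {H : Type*} [NormedAddCommGroup H] [InnerProductSpace ℂ H] [CompleteSpace H]

/-- The seminorm on `H` induced by a positive operator `A`: `‖x‖_A = √⟨Ax,x⟩`. -/
noncomputable def vnA (A : H →L[ℂ] H) (x : H) : ℝ :=
  Real.sqrt (RCLike.re (inner ℂ (A x) x : ℂ))

/-- The `A`-seminorm of an operator: `‖X‖_A = sup {‖Xx‖_A : ‖x‖_A = 1}`. -/
noncomputable def opnA (A : H →L[ℂ] H) (X : H →L[ℂ] H) : ℝ :=
  sSup ((fun x => vnA A (X x)) '' {x : H | vnA A x = 1})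

/-- The `A`-numerical radius: `ω_A(X) = sup {|⟨Xx,x⟩_A| : ‖x‖_A = 1}`. -/
noncomputable def wA (A : H →L[ℂ] H) (X : H →L[ℂ] H) : ℝ :=
  sSup ((fun x => ‖(inner ℂ (A (X x)) x : ℂ)‖) '' {x : H | vnA A x = 1})

/-- `S` is the reduced `A`-adjoint of `T`: `A ∘ S = T* ∘ A` and
`range S ⊆ closure (range A)`. -/
def IsReducedAdjA (A T S : H →L[ℂ] H) : Prop :=
  A ∘L S = (ContinuousLinearMap.adjoint T) ∘L A ∧
    Set.range S ⊆ closure (Set.range (A : H → H))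

/-- `X` is `A`-selfadjoint: `A ∘ X = X* ∘ A`. -/
def IsSelfAdjA (A X : H →L[ℂ] H) : Prop :=
  A ∘L X = (ContinuousLinearMap.adjoint X) ∘L A

/-- `Re_A(T) = (T + T♯)/2`. -/
noncomputable def ReA (T Ts : H →L[ℂ] H) : H →L[ℂ] H := (2 : ℂ)⁻¹ • (T + Ts)

/-- `Im_A(T) = (T - T♯)/(2i)`. -/
noncomputable def ImA (T Ts : H →L[ℂ] H) : H →L[ℂ] H := (2 * Complex.I)⁻¹ • (T - Ts)

open scoped InnerProductSpace

lemma le_of_forall_pow_two_pow_le_mul {x y C : ℝ} (hy : 0 ≤ y)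
    (h : ∀ n : ℕ, x ^ 2 ^ n ≤ C * y ^ 2 ^ n) : x ≤ y := by
  by_contra! hlt
  have hx0 : 0 < x := hy.trans_lt hlt
  have hr : Filter.Tendsto (fun n : ℕ => C * (y / x) ^ 2 ^ n) Filter.atTop (nhds 0) := by
    simpa using ((tendsto_pow_atTop_nhds_zero_of_lt_one (div_nonneg hy hx0.le)
      ((div_lt_one hx0).2 hlt)).comp (tendsto_pow_atTop_atTop_of_one_lt one_lt_two)).const_mul C
  obtain ⟨n, hn⟩ := (hr.eventually (gt_mem_nhds one_pos)).exists
  have hxn : 0 < x ^ 2 ^ n := by positivity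
  have : 1 * x ^ 2 ^ n ≤ C * (y / x) ^ 2 ^ n * x ^ 2 ^ n := by
    rw [mul_assoc, ← mul_pow, div_mul_cancel₀ y hx0.ne', one_mul]
    exact h n
  exact (le_of_mul_le_mul_right this hxn).not_gt hn

/-- Iterating `hsq` gives `a₀ ^ 2 ^ n ≤ c ^ (2 ^ n - 1) * aₙ ≤ (M / c) * (K * c) ^ 2 ^ n`; then take
`2 ^ n`-th roots. -/
lemma le_mul_of_sq_le_mul_succ {a : ℕ → ℝ} {c K M : ℝ} (ha : ∀ n, 0 ≤ a n) (hc : 0 ≤ c)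
    (hK : 0 ≤ K) (hsq : ∀ n, a n ^ 2 ≤ c * a (n + 1)) (hM : ∀ n, a n ≤ M * K ^ 2 ^ n) :
    a 0 ≤ K * c := by
  rcases hc.eq_or_lt with rfl | hc
  · nlinarith [hsq 0, ha 0]
  have hiter : ∀ n, c * a 0 ^ 2 ^ n ≤ c ^ 2 ^ n * a n := by
    intro n
    induction n with
    | zero => simp
    | succ n ih =>
      have hsq' : (c * a 0 ^ 2 ^ n) ^ 2 ≤ (c ^ 2 ^ n * a n) ^ 2 :=
        pow_le_pow_left₀ (by have := ha 0; positivity) ih 2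
      have hstep := mul_le_mul_of_nonneg_left (hsq n) (by positivity : 0 ≤ (c ^ 2 ^ n) ^ 2)
      refine le_of_mul_le_mul_left ?_ hc
      rw [pow_succ, pow_mul, pow_mul]
      nlinarith
  refine le_of_forall_pow_two_pow_le_mul (by positivity) (C := M / c) fun n => ?_
  rw [div_mul_eq_mul_div, le_div_iff₀ hc, mul_pow]
  nlinarith [hiter n, mul_le_mul_of_nonneg_left (hM n) (by positivity : 0 ≤ c ^ 2 ^ n)]

section Seminorm

variable {A : H →L[ℂ] H}

lemma inner_apply_eq_inner_sqrt (hA : A.IsPositive) (x y : H) :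
    ⟪A x, y⟫_ℂ = ⟪CFC.sqrt A x, CFC.sqrt A y⟫_ℂ := by
  have hA' : 0 ≤ A := (nonneg_iff_isPositive A).2 hA
  have hsa : IsSelfAdjoint (CFC.sqrt A) :=
    ((nonneg_iff_isPositive _).1 (CFC.sqrt_nonneg A)).isSelfAdjoint
  conv_lhs => rw [← CFC.sqrt_mul_sqrt_self A hA']
  exact isSelfAdjoint_iff_isSymmetric.mp hsa _ _

lemma vnA_eq_norm_sqrt (hA : A.IsPositive) (x : H) : vnA A x = ‖CFC.sqrt A x‖ := by
  rw [vnA, inner_apply_eq_inner_sqrt hA, inner_self_eq_norm_sq (𝕜 := ℂ),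
    Real.sqrt_sq (norm_nonneg _)]

omit [CompleteSpace H] in
lemma vnA_nonneg (x : H) : 0 ≤ vnA A x := Real.sqrt_nonneg _

omit [CompleteSpace H] in
lemma vnA_sq (hA : A.IsPositive) (x : H) : vnA A x ^ 2 = RCLike.re ⟪A x, x⟫_ℂ :=
  Real.sq_sqrt (hA.re_inner_nonneg_left x)

lemma norm_inner_le_vnA_mul (hA : A.IsPositive) (x y : H) :
    ‖⟪A x, y⟫_ℂ‖ ≤ vnA A x * vnA A y := by
  rw [inner_apply_eq_inner_sqrt hA, vnA_eq_norm_sqrt hA, vnA_eq_norm_sqrt hA]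
  exact norm_inner_le_norm _ _

lemma vnA_add_le (hA : A.IsPositive) (x y : H) : vnA A (x + y) ≤ vnA A x + vnA A y := by
  simp only [vnA_eq_norm_sqrt hA, map_add]
  exact norm_add_le _ _

lemma vnA_sub_le (hA : A.IsPositive) (x y : H) : vnA A (x - y) ≤ vnA A x + vnA A y := by
  simp only [vnA_eq_norm_sqrt hA, map_sub]
  exact norm_sub_le _ _

lemma vnA_smul (hA : A.IsPositive) (z : ℂ) (x : H) : vnA A (z • x) = ‖z‖ * vnA A x := by
  simp only [vnA_eq_norm_sqrt hA, map_smul, norm_smul]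

lemma vnA_le_norm_mul (hA : A.IsPositive) (x : H) : vnA A x ≤ ‖CFC.sqrt A‖ * ‖x‖ :=
  vnA_eq_norm_sqrt hA x ▸ le_opNorm _ _

omit [CompleteSpace H] in
lemma opnA_nonneg (X : H →L[ℂ] H) : 0 ≤ opnA A X :=
  Real.sSup_nonneg (by rintro _ ⟨x, -, rfl⟩; exact vnA_nonneg _)

omit [CompleteSpace H] in
lemma opnA_le {X : H →L[ℂ] H} {m : ℝ} (hm : 0 ≤ m)
    (h : ∀ x, vnA A x = 1 → vnA A (X x) ≤ m) : opnA A X ≤ m :=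
  Real.sSup_le (by rintro _ ⟨x, hx, rfl⟩; exact h x hx) hm

omit [CompleteSpace H] in
lemma opnA_le_of_forall_le_mul {X : H →L[ℂ] H} {m : ℝ} (hm : 0 ≤ m)
    (h : ∀ x, vnA A (X x) ≤ m * vnA A x) : opnA A X ≤ m :=
  opnA_le hm fun x hx => by simpa [hx] using h x

lemma vnA_apply_le_opnA_mul (hA : A.IsPositive) {X : H →L[ℂ] H} {C : ℝ}
    (hX : ∀ x, vnA A (X x) ≤ C * vnA A x) (x : H) : vnA A (X x) ≤ opnA A X * vnA A x := by
  rcases (vnA_nonneg x).eq_or_lt with h0 | h0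
  · rw [← h0, mul_zero]
    simpa [← h0] using hX x
  set u := ((vnA A x)⁻¹ : ℂ) • x
  have hu : vnA A u = 1 := by
    rw [vnA_smul hA, norm_inv, Complex.norm_real, Real.norm_of_nonneg h0.le, inv_mul_cancel₀ h0.ne']
  have hXu : vnA A (X u) ≤ opnA A X := by
    refine le_csSup ⟨C, ?_⟩ ⟨u, hu, rfl⟩
    rintro _ ⟨y, hy, rfl⟩
    simpa [show vnA A y = 1 from hy] using hX y
  rw [map_smul, vnA_smul hA, norm_inv, Complex.norm_real, Real.norm_of_nonneg h0.le,
    inv_mul_le_iff₀ h0] at hXu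
  linarith

/-! `SemiconjBy A Ts (star T)` unfolds to `A ∘L Ts = adjoint T ∘L A`: `Ts` is an `A`-adjoint of `T`,
and `SemiconjBy A R (star R)` says that `R` is `A`-selfadjoint. -/

variable {T Ts : H →L[ℂ] H}

lemma inner_apply_of_semiconjBy (h : SemiconjBy A Ts (star T)) (x y : H) :
    ⟪A (Ts x), y⟫_ℂ = ⟪A x, T y⟫_ℂ := by
  rw [← adjoint_inner_left, ← star_eq_adjoint]
  exact congrArg (⟪·, y⟫_ℂ) (DFunLike.congr_fun h x)

lemma semiconjBy_swap (hA : A.IsPositive) (h : SemiconjBy A Ts (star T)) :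
    SemiconjBy A T (star Ts) := by
  simpa [hA.isSelfAdjoint.star_eq] using h.star_star_star

lemma vnA_apply_sq_le (hA : A.IsPositive) (h : SemiconjBy A Ts (star T)) (x : H) :
    vnA A (T x) ^ 2 ≤ vnA A (Ts (T x)) * vnA A x :=
  calc vnA A (T x) ^ 2 = RCLike.re ⟪A (Ts (T x)), x⟫_ℂ := by
        rw [vnA_sq hA, inner_apply_of_semiconjBy h (T x) x]
    _ ≤ ‖⟪A (Ts (T x)), x⟫_ℂ‖ := RCLike.re_le_norm _
    _ ≤ vnA A (Ts (T x)) * vnA A x := norm_inner_le_vnA_mul hA _ _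

lemma vnA_apply_le_norm_mul_of_semiconjBy (hA : A.IsPositive) {R : H →L[ℂ] H}
    (hR : SemiconjBy A R (star R)) (x : H) : vnA A (R x) ≤ ‖R‖ * vnA A x := by
  have hsq : ∀ n, vnA A ((R ^ 2 ^ n) x) ^ 2 ≤ vnA A x * vnA A ((R ^ 2 ^ (n + 1)) x) := by
    intro n
    have hRn : SemiconjBy A (R ^ 2 ^ n) (star (R ^ 2 ^ n)) := star_pow R _ ▸ hR.pow_right _
    calc vnA A ((R ^ 2 ^ n) x) ^ 2 ≤ vnA A ((R ^ 2 ^ n) ((R ^ 2 ^ n) x)) * vnA A x :=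
          vnA_apply_sq_le hA hRn x
      _ = vnA A x * vnA A ((R ^ 2 ^ (n + 1)) x) := by
          rw [mul_comm, pow_succ, pow_mul, sq]; rfl
  have hM : ∀ n, vnA A ((R ^ 2 ^ n) x) ≤ ‖CFC.sqrt A‖ * ‖x‖ * ‖R‖ ^ 2 ^ n := by
    intro n
    calc vnA A ((R ^ 2 ^ n) x) ≤ ‖CFC.sqrt A‖ * (‖R ^ 2 ^ n‖ * ‖x‖) :=
          (vnA_le_norm_mul hA _).trans (by gcongr; exact le_opNorm _ _)
      _ ≤ ‖CFC.sqrt A‖ * (‖R‖ ^ 2 ^ n * ‖x‖) := by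
          gcongr; exact norm_pow_le' R (by positivity)
      _ = ‖CFC.sqrt A‖ * ‖x‖ * ‖R‖ ^ 2 ^ n := by ring
  simpa using le_mul_of_sq_le_mul_succ (fun _ => vnA_nonneg _) (vnA_nonneg x) (norm_nonneg R)
    hsq hM

lemma vnA_apply_le_opnA_mul_of_semiconjBy (hA : A.IsPositive) (h : SemiconjBy A Ts (star T))
    (x : H) : vnA A (T x) ≤ opnA A T * vnA A x := by
  refine vnA_apply_le_opnA_mul hA (C := √‖Ts * T‖) (fun y => ?_) x
  have hR : SemiconjBy A (Ts * T) (star (Ts * T)) :=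
    star_mul Ts T ▸ h.mul_right (semiconjBy_swap hA h)
  refine (pow_le_pow_iff_left₀ (vnA_nonneg _) (mul_nonneg (Real.sqrt_nonneg _) (vnA_nonneg y))
    two_ne_zero).1 ?_
  calc vnA A (T y) ^ 2 ≤ vnA A ((Ts * T) y) * vnA A y := vnA_apply_sq_le hA h y
    _ ≤ ‖Ts * T‖ * vnA A y * vnA A y :=
        mul_le_mul_of_nonneg_right (vnA_apply_le_norm_mul_of_semiconjBy hA hR y) (vnA_nonneg y)
    _ = (√‖Ts * T‖ * vnA A y) ^ 2 := by rw [mul_pow, Real.sq_sqrt (norm_nonneg _)]; ring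

lemma vnA_adjoint_apply_le_opnA_mul (hA : A.IsPositive) (h : SemiconjBy A Ts (star T))
    (x : H) : vnA A (Ts x) ≤ opnA A T * vnA A x := by
  have hsq : vnA A (Ts x) ^ 2 ≤ vnA A (Ts x) * (opnA A T * vnA A x) :=
    calc vnA A (Ts x) ^ 2 ≤ vnA A (T (Ts x)) * vnA A x :=
          vnA_apply_sq_le hA (semiconjBy_swap hA h) x
      _ ≤ opnA A T * vnA A (Ts x) * vnA A x :=
          mul_le_mul_of_nonneg_right (vnA_apply_le_opnA_mul_of_semiconjBy hA h _) (vnA_nonneg x)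
      _ = vnA A (Ts x) * (opnA A T * vnA A x) := by ring
  nlinarith [vnA_nonneg (A := A) (Ts x),
    mul_nonneg (opnA_nonneg (A := A) T) (vnA_nonneg (A := A) x)]

lemma opnA_le_sqrt_of_semiconjBy (hA : A.IsPositive) (h : SemiconjBy A Ts (star T)) {m : ℝ}
    (hm : ∀ x, vnA A (Ts (T x)) ≤ m * vnA A x) : opnA A T ≤ √m :=
  opnA_le (Real.sqrt_nonneg m) fun x hx =>
    Real.le_sqrt_of_sq_le <| by
      simpa [hx] using
        (vnA_apply_sq_le hA h x).trans (mul_le_mul_of_nonneg_right (hm x) (vnA_nonneg x))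

lemma vnA_adjoint_apply_apply_le {U Us V Vs : H →L[ℂ] H} (hA : A.IsPositive)
    (hU : SemiconjBy A Us (star U)) (hV : SemiconjBy A Vs (star V)) (x : H) :
    vnA A (Us (V x)) ≤ opnA A U * (opnA A V * vnA A x) :=
  (vnA_adjoint_apply_le_opnA_mul hA hU _).trans <|
    mul_le_mul_of_nonneg_left (vnA_apply_le_opnA_mul_of_semiconjBy hA hV x) (opnA_nonneg U)

end Seminorm

theorem stmt5_general (A T S Ts Ss : H →L[ℂ] H) (hA : A.IsPositive)
    (hTs : IsReducedAdjA A T Ts) (hSs : IsReducedAdjA A S Ss) :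
    (opnA A (T + S) ≤ Real.sqrt (opnA A (Ts ∘L T + Ss ∘L S) + opnA A (Ts ∘L S + Ss ∘L T)) ∧ opnA A (T - S) ≤ Real.sqrt (opnA A (Ts ∘L T + Ss ∘L S) + opnA A (Ts ∘L S + Ss ∘L T))) ∧
    Real.sqrt (opnA A (Ts ∘L T + Ss ∘L S) + opnA A (Ts ∘L S + Ss ∘L T)) ≤ opnA A T + opnA A S := by
  have hT : SemiconjBy A Ts (star T) := hTs.1
  have hS : SemiconjBy A Ss (star S) := hSs.1
  set P := Ts ∘L T + Ss ∘L S
  set Q := Ts ∘L S + Ss ∘L T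
  have hP (x : H) : vnA A (P x) ≤ (opnA A T ^ 2 + opnA A S ^ 2) * vnA A x :=
    calc vnA A (P x) ≤ vnA A (Ts (T x)) + vnA A (Ss (S x)) := vnA_add_le hA _ _
      _ ≤ opnA A T * (opnA A T * vnA A x) + opnA A S * (opnA A S * vnA A x) :=
          add_le_add (vnA_adjoint_apply_apply_le hA hT hT x)
            (vnA_adjoint_apply_apply_le hA hS hS x)
      _ = _ := by ring
  have hQ (x : H) : vnA A (Q x) ≤ 2 * opnA A T * opnA A S * vnA A x :=
    calc vnA A (Q x) ≤ vnA A (Ts (S x)) + vnA A (Ss (T x)) := vnA_add_le hA _ _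
      _ ≤ opnA A T * (opnA A S * vnA A x) + opnA A S * (opnA A T * vnA A x) :=
          add_le_add (vnA_adjoint_apply_apply_le hA hT hS x)
            (vnA_adjoint_apply_apply_le hA hS hT x)
      _ = _ := by ring
  have hPQ (x : H) : vnA A (P x) + vnA A (Q x) ≤ (opnA A P + opnA A Q) * vnA A x := by
    rw [add_mul]
    exact add_le_add (vnA_apply_le_opnA_mul hA hP x) (vnA_apply_le_opnA_mul hA hQ x)
  have ha := opnA_nonneg (A := A) T
  have hb := opnA_nonneg (A := A) S
  refine ⟨⟨opnA_le_sqrt_of_semiconjBy hA (by rw [star_add]; exact hT.add_right hS) fun x => ?_,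
    opnA_le_sqrt_of_semiconjBy hA (by rw [star_sub]; exact hT.sub_right hS) fun x => ?_⟩, ?_⟩
  · have hexpand : (Ts + Ss) ((T + S) x) = P x + Q x := by
      simp only [add_apply, map_add, comp_apply, P, Q]; abel
    exact hexpand ▸ (vnA_add_le hA _ _).trans (hPQ x)
  · have hexpand : (Ts - Ss) ((T - S) x) = P x - Q x := by
      simp only [sub_apply, map_sub, add_apply, comp_apply, P, Q]; abel
    exact hexpand ▸ (vnA_sub_le hA _ _).trans (hPQ x)
  · have hPb := opnA_le_of_forall_le_mul (by positivity) hP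
    have hQb := opnA_le_of_forall_le_mul (by positivity) hQ
    exact Real.sqrt_le_iff.2 ⟨by positivity, by nlinarith⟩

theorem stmt5 (A T S Ts Ss : H →L[ℂ] H) (hA : A.IsPositive) (hA0 : A ≠ 0)
    (hTs : IsReducedAdjA A T Ts) (hSs : IsReducedAdjA A S Ss) :
    (opnA A (T + S) ≤ Real.sqrt (opnA A (Ts ∘L T + Ss ∘L S) + opnA A (Ts ∘L S + Ss ∘L T)) ∧ opnA A (T - S) ≤ Real.sqrt (opnA A (Ts ∘L T + Ss ∘L S) + opnA A (Ts ∘L S + Ss ∘L T))) ∧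
    Real.sqrt (opnA A (Ts ∘L T + Ss ∘L S) + opnA A (Ts ∘L S + Ss ∘L T)) ≤ opnA A T + opnA A S :=
  stmt5_general A T S Ts Ss hA hTs hSs
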